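/- Let H be a complex Hilbert space and let T ∈ B(H) be invertible and p-hyponormal for some p > 0. Then T is log-hyponormal, i.e., log|T| ≥ log|T^*|. -/

import Mathlib

set_option maxHeartbeats 1000000
set_option synthInstance.maxHeartbeats 1000000

open CFC NNReal

section AbstractCStar
variable {A : Type*} [CStarAlgebra A] [PartialOrder A] [StarOrderedRing A]

lemma my_isUnit_rpow {a : A} (hau : IsUnit a) (ha : 0 ≤ a) (x : ℝ) :
    IsUnit (a ^ x) := by
  have h0 : 0 ∉ spectrum ℝ≥0 a := spectrum.zero_notMem ℝ≥0 hau
  exact ⟨⟨a ^ x, a ^ (-x), CFC.rpow_mul_rpow_neg x (hau.isStrictlyPositive ha), CFC.rpow_neg_mul_rpow x (hau.isStrictlyPositive ha)⟩, rfl⟩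

lemma my_sqrt_le_sqrt {a b : A} (ha : 0 ≤ a) (hau : IsUnit a) (hab : a ≤ b) :
    CFC.sqrt a ≤ CFC.sqrt b := by
  nontriviality A
  have hb : 0 ≤ b := ha.trans hab
  have hbu : IsUnit b := CStarAlgebra.isUnit_of_le a hab (hau.isStrictlyPositive ha)
  have ha0 : 0 ∉ spectrum ℝ≥0 a := spectrum.zero_notMem ℝ≥0 hau
  have hb0 : 0 ∉ spectrum ℝ≥0 b := spectrum.zero_notMem ℝ≥0 hbu
  have hkey : ‖CFC.sqrt a * b ^ (-(1/2) : ℝ)‖ ≤ 1 :=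
    (le_iff_norm_sqrt_mul_rpow a b ha (hbu.isStrictlyPositive hb)).mp hab
  rw [CFC.sqrt_eq_rpow (a := a)] at hkey
  have hsbu : IsUnit (CFC.sqrt b) := by
    rw [CFC.sqrt_eq_rpow (a := b)]; exact my_isUnit_rpow hbu hb _
  rw [le_iff_norm_sqrt_mul_rpow _ _ (CFC.sqrt_nonneg a) (hsbu.isStrictlyPositive (CFC.sqrt_nonneg b))]
  rw [CFC.sqrt_eq_rpow (a := a), CFC.rpow_sqrt b _ hbu hb,
    CFC.sqrt_rpow (a := a) hau (by norm_num : (1/2:ℝ) ≠ 0)]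
  set u : A := a ^ ((1/2 : ℝ)/2) with hu
  set v : A := b ^ (-(1/2)/2 : ℝ) with hv
  have hunn : 0 ≤ u := CFC.rpow_nonneg
  have hvnn : 0 ≤ v := CFC.rpow_nonneg
  -- ‖u * v‖ ^ 2 = ‖v * a^(1/2) * v‖
  have hsq : ‖u * v‖ * ‖u * v‖ = ‖v * a ^ (1/2 : ℝ) * v‖ := by
    rw [← CStarRing.norm_star_mul_self (x := u * v), star_mul,
      (IsSelfAdjoint.of_nonneg hunn).star_eq, (IsSelfAdjoint.of_nonneg hvnn).star_eq]
    congr 1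
    have huu : u * u = a ^ (1/2 : ℝ) := by
      rw [hu, ← CFC.rpow_add hau]; norm_num
    calc v * u * (u * v) = v * (u * u) * v := by simp only [mul_assoc]
      _ = v * a ^ (1/2 : ℝ) * v := by rw [huu]
  have hy : 0 ≤ v * a ^ (1/2 : ℝ) * v := conjugate_nonneg_of_nonneg CFC.rpow_nonneg hvnn
  have hyle : v * a ^ (1/2 : ℝ) * v ≤ 1 := by
    rw [← map_one (algebraMap ℝ A)]
    apply le_algebraMap_of_spectrum_le (ha := IsSelfAdjoint.of_nonneg hy)
    intro x hx
    rcases eq_or_ne x 0 with rfl | hx0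
    · exact zero_le_one
    · have hx' : x ∈ spectrum ℝ (a ^ (1/2 : ℝ) * v * v) := by
        have h1 : spectrum ℝ (v * (a ^ (1/2 : ℝ) * v)) \ {0}
            = spectrum ℝ ((a ^ (1/2 : ℝ) * v) * v) \ {0} :=
          spectrum.nonzero_mul_comm v (a ^ (1/2 : ℝ) * v)
        rw [← mul_assoc] at h1
        have hxmem : x ∈ spectrum ℝ (v * a ^ (1/2:ℝ) * v) \ {0} := ⟨hx, hx0⟩
        have := h1 ▸ hxmem
        exact this.1
      have hvv : a ^ (1/2 : ℝ) * v * v = a ^ (1/2:ℝ) * b ^ (-(1/2) : ℝ) := by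
        rw [mul_assoc, hv, ← CFC.rpow_add hbu]
        norm_num
      rw [hvv] at hx'
      calc x ≤ ‖x‖ := le_abs_self x
        _ ≤ ‖a ^ (1/2:ℝ) * b ^ (-(1/2) : ℝ)‖ := spectrum.norm_le_norm_of_mem hx'
        _ ≤ 1 := hkey
  have : ‖u * v‖ * ‖u * v‖ ≤ 1 := hsq ▸ (CStarAlgebra.norm_le_one_iff_of_nonneg _ hy).mpr hyle
  nlinarith [norm_nonneg (u * v)]

lemma my_rpow_pow_le {a b : A} (ha : 0 ≤ a) (hau : IsUnit a) (hab : a ≤ b) (n : ℕ) :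
    a ^ ((2⁻¹ : ℝ) ^ n) ≤ b ^ ((2⁻¹ : ℝ) ^ n) := by
  have hb : 0 ≤ b := ha.trans hab
  have ha0 : 0 ∉ spectrum ℝ≥0 a := spectrum.zero_notMem ℝ≥0 hau
  have hbu : IsUnit b := CStarAlgebra.isUnit_of_le a hab (hau.isStrictlyPositive ha)
  have hb0 : 0 ∉ spectrum ℝ≥0 b := spectrum.zero_notMem ℝ≥0 hbu
  induction n with
  | zero => simpa [CFC.rpow_one a ha, CFC.rpow_one b hb] using hab
  | succ n ih =>
    have hne : ((2⁻¹ : ℝ) ^ n) ≠ 0 := by positivity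
    have hsq : ∀ (c : A), 0 ∉ spectrum ℝ≥0 c →
        CFC.sqrt (c ^ ((2⁻¹:ℝ)^n)) = c ^ ((2⁻¹:ℝ)^(n+1)) := by
      intro c hc0
      have he : (2⁻¹:ℝ)^(n+1) = ((2⁻¹:ℝ)^n)/2 := by rw [pow_succ]; ring
      rw [CFC.sqrt_rpow (a := c) ((spectrum.zero_notMem_iff ℝ≥0).mp hc0) hne, he]
    rw [← hsq a ha0, ← hsq b hb0]
    exact my_sqrt_le_sqrt CFC.rpow_nonneg (my_isUnit_rpow hau ha _) ih

open Filter Topology in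
lemma my_tendsto_log {X : A} (hX : 0 ≤ X) (hXu : IsUnit X) :
    Tendsto (fun n : ℕ => ((2:ℝ) ^ n) • (X ^ ((2⁻¹:ℝ) ^ n) - 1)) atTop
      (𝓝 (cfc Real.log X)) := by
  have hXsa : IsSelfAdjoint X := .of_nonneg hX
  have hpos : ∀ x ∈ spectrum ℝ X, 0 < x := by
    intro x hx
    rcases (spectrum_nonneg_of_nonneg hX hx).lt_or_eq with h | h
    · exact h
    · exact absurd (h ▸ hx) (spectrum.zero_notMem ℝ hXu)
  have hlogc : ContinuousOn Real.log (spectrum ℝ X) :=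
    Real.continuousOn_log.mono fun x hx => (hpos x hx).ne'
  set C := ‖cfc Real.log X‖ with hCdef
  have hC0 : 0 ≤ C := norm_nonneg _
  have hC : ∀ x ∈ spectrum ℝ X, |Real.log x| ≤ C := fun x hx =>
    norm_apply_le_norm_cfc Real.log X hx hlogc hXsa
  set h : ℕ → ℝ := fun n => (2⁻¹:ℝ)^n with hh
  have hhpos : ∀ n, 0 < h n := fun n => by positivity
  have hh0 : Tendsto h atTop (𝓝 0) :=
    tendsto_pow_atTop_nhds_zero_of_lt_one (by norm_num) (by norm_num)
  have hgc : ∀ n, Continuous (fun x : ℝ => x ^ h n) := fun n =>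
    Real.continuous_rpow_const (hhpos n).le
  have hpoweq : ∀ n, X ^ (h n) = cfc (fun x : ℝ => x ^ h n) X := by
    intro n
    rw [CFC.rpow_def, cfc_nnreal_eq_real _ _ hX]
    apply cfc_congr
    intro x hx
    simp only [NNReal.coe_rpow, Real.coe_toNNReal x (hpos x hx).le]
  have hDeq : ∀ n, ((2:ℝ) ^ n) • (X ^ (h n) - 1)
      = cfc (fun x : ℝ => (2:ℝ)^n * (x ^ h n - 1)) X := by
    intro n
    have heq : (fun x : ℝ => (2:ℝ)^n * (x ^ h n - 1))
        = fun x : ℝ => (2:ℝ)^n • (x ^ h n - 1) := by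
      ext x; simp [smul_eq_mul]
    rw [heq, cfc_smul ((2:ℝ)^n) (fun x : ℝ => x ^ h n - 1) X (((hgc n).sub continuous_const).continuousOn),
      cfc_sub (fun x : ℝ => x ^ h n) (fun _ : ℝ => (1:ℝ)) X ((hgc n).continuousOn) continuousOn_const,
      cfc_const_one ℝ X, hpoweq n]
  have hdiff : ∀ n, ((2:ℝ)^n) • (X ^ (h n) - 1) - cfc Real.log X
      = cfc (fun x : ℝ => (2:ℝ)^n * (x ^ h n - 1) - Real.log x) X := by
    intro n
    rw [hDeq n, ← cfc_sub (fun x : ℝ => (2:ℝ)^n * (x ^ h n - 1)) Real.log X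
      ((continuous_const.mul ((hgc n).sub continuous_const)).continuousOn) hlogc]
  have hev : ∀ᶠ n in atTop, ∀ x ∈ spectrum ℝ X,
      |(2:ℝ)^n * (x ^ h n - 1) - Real.log x| ≤ C^2 * h n := by
    have hev1 : ∀ᶠ n in atTop, h n * C ≤ 1 := by
      have hev0 : ∀ᶠ n in atTop, h n < (C+1)⁻¹ := hh0.eventually (gt_mem_nhds (by positivity))
      filter_upwards [hev0] with n hn
      have h1 : h n * C ≤ (C+1)⁻¹ * C :=
        mul_le_mul_of_nonneg_right hn.le hC0
      have h2 : (C+1)⁻¹ * C ≤ 1 := by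
        rw [inv_mul_le_iff₀ (by positivity)]; nlinarith
      linarith
    filter_upwards [hev1] with n hn x hx
    have hx0 : 0 < x := hpos x hx
    have hL := hC x hx
    set L := Real.log x with hLdef
    have hxp : x ^ h n = Real.exp (L * h n) := Real.rpow_def_of_pos hx0 _
    have h2n : (2:ℝ)^n = (h n)⁻¹ := by
      rw [hh]; simp [inv_pow]
    have hu1 : |L * h n| ≤ 1 := by
      rw [abs_mul, abs_of_pos (hhpos n)]
      calc |L| * h n ≤ C * h n := mul_le_mul_of_nonneg_right hL (hhpos n).le
        _ = h n * C := mul_comm _ _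
        _ ≤ 1 := hn
    have hexp := Real.abs_exp_sub_one_sub_id_le hu1
    have key : (2:ℝ)^n * (x ^ h n - 1) - L
        = (h n)⁻¹ * (Real.exp (L * h n) - 1 - L * h n) := by
      rw [hxp, h2n]
      have hne := (hhpos n).ne'
      field_simp
    rw [key, abs_mul, abs_of_pos (inv_pos.mpr (hhpos n))]
    calc (h n)⁻¹ * |Real.exp (L * h n) - 1 - L * h n|
        ≤ (h n)⁻¹ * (L * h n)^2 := mul_le_mul_of_nonneg_left hexp (by positivity)
      _ = L^2 * h n := by field_simp
      _ ≤ C^2 * h n := by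
          have hL2 : L^2 ≤ C^2 := by nlinarith [sq_abs L, abs_nonneg L]
          exact mul_le_mul_of_nonneg_right hL2 (hhpos n).le
  have hnorm : ∀ᶠ n in atTop,
      ‖((2:ℝ)^n) • (X ^ (h n) - 1) - cfc Real.log X‖ ≤ C^2 * h n := by
    filter_upwards [hev] with n hn
    rw [hdiff n]
    exact norm_cfc_le (by positivity) (fun x hx => by rw [Real.norm_eq_abs]; exact hn x hx)
  have hlim : Tendsto (fun n => C^2 * h n) atTop (𝓝 0) := by
    have := hh0.const_mul (C^2)
    rwa [mul_zero] at this
  rw [← tendsto_sub_nhds_zero_iff]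
  exact squeeze_zero_norm' hnorm hlim

lemma my_log_le_log {a b : A} (ha : 0 ≤ a) (hau : IsUnit a) (hab : a ≤ b) :
    cfc Real.log a ≤ cfc Real.log b := by
  have hb : 0 ≤ b := ha.trans hab
  have hbu : IsUnit b := CStarAlgebra.isUnit_of_le a hab (hau.isStrictlyPositive ha)
  rw [← sub_nonneg]
  refine (CStarAlgebra.isClosed_nonneg (A := A)).mem_of_tendsto
    (((my_tendsto_log hb hbu).sub (my_tendsto_log ha hau)))
    (Filter.Eventually.of_forall fun n => ?_)
  simp only [Set.mem_setOf_eq, sub_nonneg]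
  have h1 : a ^ ((2⁻¹:ℝ)^n) - 1 ≤ b ^ ((2⁻¹:ℝ)^n) - 1 :=
    sub_le_sub_right (my_rpow_pow_le ha hau hab n) 1
  exact smul_le_smul_of_nonneg_left h1 (by positivity)

lemma my_spec_pos {X : A} (hX : 0 ≤ X) (hXu : IsUnit X) :
    ∀ x ∈ spectrum ℝ X, 0 < x := by
  intro x hx
  rcases (spectrum_nonneg_of_nonneg hX hx).lt_or_eq with h | h
  · exact h
  · exact absurd (h ▸ hx) (spectrum.zero_notMem ℝ hXu)

lemma my_log_cfc_rpow {X : A} (hX : 0 ≤ X) (hXu : IsUnit X) {p : ℝ} (hp : 0 < p) :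
    cfc Real.log (cfc (fun t : ℝ => t ^ p) X) = p • cfc Real.log X := by
  have hpos := my_spec_pos hX hXu
  have hf : ContinuousOn (fun t : ℝ => t ^ p) (spectrum ℝ X) :=
    (Real.continuous_rpow_const hp.le).continuousOn
  have hg : ContinuousOn Real.log ((fun t : ℝ => t ^ p) '' spectrum ℝ X) := by
    refine Real.continuousOn_log.mono ?_
    rintro y ⟨x, hx, rfl⟩
    exact (Real.rpow_pos_of_pos (hpos x hx) p).ne'
  rw [← cfc_comp Real.log (fun t : ℝ => t ^ p) X (hg := hg) (hf := hf) (ha := .of_nonneg hX)]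
  have : ∀ x ∈ spectrum ℝ X, (Real.log ∘ fun t : ℝ => t ^ p) x = p • Real.log x := by
    intro x hx
    simp only [Function.comp_apply, smul_eq_mul]
    exact Real.log_rpow (hpos x hx) p
  rw [cfc_congr this, cfc_smul p Real.log X (Real.continuousOn_log.mono
    fun x hx => (hpos x hx).ne')]

lemma my_log_cfc_sqrt {X : A} (hX : 0 ≤ X) (hXu : IsUnit X) :
    cfc Real.log (cfc Real.sqrt X) = (2⁻¹ : ℝ) • cfc Real.log X := by
  have hpos := my_spec_pos hX hXu
  have hg : ContinuousOn Real.log (Real.sqrt '' spectrum ℝ X) := by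
    refine Real.continuousOn_log.mono ?_
    rintro y ⟨x, hx, rfl⟩
    exact (Real.sqrt_pos.mpr (hpos x hx)).ne'
  rw [← cfc_comp Real.log Real.sqrt X (hg := hg) (hf := Real.continuous_sqrt.continuousOn) (ha := .of_nonneg hX)]
  have : ∀ x ∈ spectrum ℝ X, (Real.log ∘ Real.sqrt) x = (2⁻¹:ℝ) • Real.log x := by
    intro x hx
    simp only [Function.comp_apply, smul_eq_mul]
    rw [Real.log_sqrt (hpos x hx).le]; ring
  rw [cfc_congr this, cfc_smul (2⁻¹:ℝ) Real.log X (Real.continuousOn_log.mono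
    fun x hx => (hpos x hx).ne')]

lemma my_cfc_rpow_nonneg_unit {X : A} (hX : 0 ≤ X) (hXu : IsUnit X) {p : ℝ} (hp : 0 < p) :
    0 ≤ cfc (fun t : ℝ => t ^ p) X ∧ IsUnit (cfc (fun t : ℝ => t ^ p) X) := by
  have hpos := my_spec_pos hX hXu
  have hf : ContinuousOn (fun t : ℝ => t ^ p) (spectrum ℝ X) :=
    (Real.continuous_rpow_const hp.le).continuousOn
  constructor
  · exact cfc_nonneg fun x hx => Real.rpow_nonneg (hpos x hx).le p
  · rw [← spectrum.zero_notMem_iff ℝ, cfc_map_spectrum (R := ℝ) (fun t : ℝ => t ^ p) X (hf := hf) (ha := .of_nonneg hX)]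
    rintro ⟨x, hx, hx0⟩
    exact absurd hx0.symm (Real.rpow_pos_of_pos (hpos x hx) p).ne


end AbstractCStar

open ContinuousLinearMap Filter Topology

variable {H : Type*} [NormedAddCommGroup H] [InnerProductSpace ℂ H] [CompleteSpace H]

/-- The absolute value `|T| = (T^*T)^{1/2}` of a bounded operator, via the
continuous functional calculus. -/
noncomputable def opAbs (T : H →L[ℂ] H) : H →L[ℂ] H :=
  cfc Real.sqrt (adjoint T * T)

/-- `T` is `p`-hyponormal: `(T^*T)^p ≥ (TT^*)^p`, powers via the continuous
functional calculus, and `≤` is the Loewner order. -/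
def IsPHyponormal (p : ℝ) (T : H →L[ℂ] H) : Prop :=
  cfc (fun t : ℝ => t ^ p) (T * adjoint T) ≤ cfc (fun t : ℝ => t ^ p) (adjoint T * T)

theorem stmt13 (T : H →L[ℂ] H) (hinv : IsUnit T)
    (p : ℝ) (hp : 0 < p) (hT : IsPHyponormal p T) :
    cfc Real.log (opAbs (adjoint T)) ≤ cfc Real.log (opAbs T) := by
  have hTstar : IsUnit (adjoint T) := by rw [← star_eq_adjoint]; exact hinv.star
  have hP : (0 : H →L[ℂ] H) ≤ adjoint T * T := by
    rw [← star_eq_adjoint]; exact star_mul_self_nonneg T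
  have hQ : (0 : H →L[ℂ] H) ≤ T * adjoint T := by
    rw [← star_eq_adjoint]; exact mul_star_self_nonneg T
  have hPu : IsUnit (adjoint T * T) := hTstar.mul hinv
  have hQu : IsUnit (T * adjoint T) := hinv.mul hTstar
  obtain ⟨ha, hau⟩ := my_cfc_rpow_nonneg_unit hQ hQu hp
  have key := my_log_le_log ha hau hT
  rw [my_log_cfc_rpow hQ hQu hp, my_log_cfc_rpow hP hPu hp] at key
  have key2 : cfc Real.log (T * adjoint T) ≤ cfc Real.log (adjoint T * T) := by
    have h2 := smul_le_smul_of_nonneg_left key (inv_nonneg.mpr hp.le)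
    rwa [smul_smul, smul_smul, inv_mul_cancel₀ hp.ne', one_smul, one_smul] at h2
  have hQ' : opAbs (adjoint T) = cfc Real.sqrt (T * adjoint T) := by
    rw [opAbs, adjoint_adjoint]
  rw [hQ', opAbs, my_log_cfc_sqrt hQ hQu, my_log_cfc_sqrt hP hPu]
  exact smul_le_smul_of_nonneg_left key2 (by norm_num)
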